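/- Let q > 1 be a real number and n ≥ 1 an integer. For 0 ≤ l ≤ 2n, let 𝔐_l be the (l+1)×(l+1) real matrix with (i, s)-entry (-q)^{s(2n-i)} (0 ≤ i, s ≤ l), let d_{i,l} (0 ≤ i ≤ l) be the components of the unique solution of 𝔐_l d = (0, …, 0, 1)^T, let Δ be the (2n+1)×(2n+1) upper triangular matrix with Δ_{i,l} = d_{i,l} for i ≤ l, let v ∈ ℝ^{2n+1} have v_0 = 0 and v_k = (-q)^{n(2n-k) - 4n²} - (-q)^{-2n²} for 1 ≤ k ≤ 2n, and let K = (K_0, …, K_{2n}) be the unique solution of (𝔐_{2n}·Δ)·K = v. Then for every 1 ≤ i ≤ n and 0 ≤ p ≤ i, K_i · d_{p,i} = (-1)^{i-p} · (-q)^{(n+1)(i-p) + (3n-i+1)(n-i)/2 - 4n²} · (∏_{j=1}^{n-p} ((-q)^n - (-q)^{j-1})) / ( (∏_{j=1}^{i-p} ((-q)^j - 1)) · (∏_{j=1}^{n-i} ((-q)^j - 1)) ), where empty products equal 1 and the exponent (3n-i+1)(n-i)/2 is an integer. -/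

import Mathlib

/-!
With nodes `x_i = (-q)^(2n-i)`, `𝔐_l` is the Vandermonde matrix of `x_0, …, x_l`, so the column
`d_{·,l}` lists the coefficients of `N_l(z) / N_l(x_l)`, where `N_l(z) = ∏_{j<l} (z - x_j)`.
Expanding this product at geometric nodes (q-binomial theorem) gives `d_{p,i}` explicitly.
Moreover `(𝔐_{2n} Δ)_{i,l} = N_l(x_i) / N_l(x_l)`, so the system for `𝒦` is Newton interpolation
at the nodes of `c (z^n - x_0^n)` with `c = (-q)^(-4n²)`, which is what `v` tabulates. The
inverse (q-Newton) expansion `z^n = ∑_l x^((n-l)(2n-l)) [n, l] N_l(z)`, with `x = -q`, therefore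
gives `𝒦_l = c x^((n-l)(2n-l)) [n, l] N_l(x_l)` for `l ≥ 1`. In `𝒦_i d_{p,i}` the weight
`N_i(x_i)` cancels, and the remaining product of two Gaussian binomials telescopes into the
stated quotient of q-factorials.
-/

/-- The matrix `𝔐_l` of the paper. -/
noncomputable def Mmat (q : ℝ) (n l : ℕ) : Matrix (Fin (l + 1)) (Fin (l + 1)) ℝ :=
  Matrix.of fun i s => (-q) ^ ((s : ℕ) * (2 * n - (i : ℕ)))

open Finset Matrix

section QBinomial

variable {R : Type*}

def qBinom [Semiring R] (x : R) : ℕ → ℕ → R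
  | _, 0 => 1
  | 0, _ + 1 => 0
  | n + 1, k + 1 => qBinom x n (k + 1) + x ^ (n - k) * qBinom x n k

section Semiring

variable [Semiring R] (x : R)

@[simp] lemma qBinom_zero_right (n : ℕ) : qBinom x n 0 = 1 := by cases n <;> rfl

lemma qBinom_succ_succ (n k : ℕ) :
    qBinom x (n + 1) (k + 1) = qBinom x n (k + 1) + x ^ (n - k) * qBinom x n k := rfl

lemma qBinom_eq_zero_of_lt {n k : ℕ} (h : n < k) : qBinom x n k = 0 := by
  induction n generalizing k with
  | zero => obtain ⟨k, rfl⟩ := Nat.exists_eq_add_of_lt h; rfl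
  | succ n ih =>
    obtain ⟨k, rfl⟩ := Nat.exists_eq_add_of_lt (Nat.zero_lt_of_lt h)
    rw [qBinom_succ_succ, ih (by omega), ih (by omega), mul_zero, add_zero]

@[simp] lemma qBinom_self (n : ℕ) : qBinom x n n = 1 := by
  induction n with
  | zero => rfl
  | succ n ih => rw [qBinom_succ_succ, qBinom_eq_zero_of_lt x n.lt_succ_self, ih]; simp

end Semiring

/-- The unnormalised q-factorial `∏_{j=1}^m (x^j - 1) = (x - 1)^m [m]_x!`. -/
def qFactorial [CommRing R] (x : R) (m : ℕ) : R := ∏ j ∈ Icc 1 m, (x ^ j - 1)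

section CommRing

variable [CommRing R] (x : R)

@[simp] lemma qFactorial_zero : qFactorial x 0 = 1 := rfl

lemma qFactorial_succ (m : ℕ) : qFactorial x (m + 1) = qFactorial x m * (x ^ (m + 1) - 1) :=
  prod_Icc_succ_top (by omega) _

lemma qBinom_mul_qFactorial_mul_qFactorial {n k : ℕ} (h : k ≤ n) :
    qBinom x n k * (qFactorial x k * qFactorial x (n - k)) = qFactorial x n := by
  induction n generalizing k with
  | zero =>
    obtain rfl : k = 0 := by omega
    simp
  | succ n ih =>
    rcases k with _ | k
    · simp
    obtain hk | rfl : k < n ∨ k = n := by omega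
    · obtain ⟨r, rfl⟩ : ∃ r, n = k + r + 1 := ⟨n - k - 1, by omega⟩
      have h₁ := ih (k := k + 1) (by omega)
      have h₂ := ih (k := k) (by omega)
      rw [show k + r + 1 - (k + 1) = r by omega] at h₁
      rw [show k + r + 1 - k = r + 1 by omega] at h₂
      rw [show k + r + 1 + 1 - (k + 1) = r + 1 by omega, qBinom_succ_succ,
        show k + r + 1 - k = r + 1 by omega]
      simp only [qFactorial_succ] at *
      linear_combination (x ^ (r + 1) - 1) * h₁ + x ^ (r + 1) * (x ^ (k + 1) - 1) * h₂
    · simp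

end CommRing

lemma pow_sub_mul_qBinom {K : Type*} [Field K] (x : K) (n k : ℕ) :
    x ^ (n - k) * qBinom x n k = x ^ ((n : ℤ) - k) * qBinom x n k := by
  rcases le_or_gt k n with h | h
  · rw [← zpow_natCast, Nat.cast_sub h]
  · simp [qBinom_eq_zero_of_lt x h]

end QBinomial

section Recurrence

variable {R : Type*} [CommRing R]

/-- The common shape of the q-binomial theorem and of the q-Newton expansion: `c m` expands
`∏_{j<m} u j` in a basis `B` on which multiplication by `u m` acts bidiagonally. -/
lemma sum_mul_eq_prod_of_recurrence {B u : ℕ → R} {b c : ℕ → ℕ → R}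
    (hB : ∀ m l, B l * u m = B (l + 1) + b m l * B l)
    (hc₀ : ∀ m, c (m + 1) 0 = b m 0 * c m 0)
    (hc : ∀ m l, c (m + 1) (l + 1) = c m l + b m (l + 1) * c m (l + 1))
    (hc_top : ∀ m, c m (m + 1) = 0) (m : ℕ) :
    ∑ l ∈ range (m + 1), c m l * B l = (∏ j ∈ range m, u j) * (c 0 0 * B 0) := by
  induction m with
  | zero => simp
  | succ m ih =>
    calc ∑ l ∈ range (m + 2), c (m + 1) l * B l
        = ∑ l ∈ range (m + 1), c m l * B (l + 1)
            + ∑ l ∈ range (m + 2), b m l * c m l * B l := by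
          rw [sum_range_succ' (fun l => c (m + 1) l * B l) (m + 1),
            sum_range_succ' (fun l => b m l * c m l * B l) (m + 1)]
          simp only [hc, hc₀, add_mul, sum_add_distrib]
          ring
      _ = (∑ l ∈ range (m + 1), c m l * B l) * u m := by
          rw [sum_range_succ _ (m + 1), hc_top, sum_mul]
          simp only [mul_assoc, hB, mul_add, sum_add_distrib, mul_left_comm (b _ _)]
          ring
      _ = _ := by rw [ih, prod_range_succ]; ring

end Recurrence

section GeometricNodes

variable {K : Type*} [Field K] (x : K) (M : ℤ)

def prodCoeff (m s : ℕ) : K :=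
  (-1) ^ (m + s) * x ^ (M * (m - s) + s.choose 2 - m.choose 2) * qBinom x m s

def newtonCoeff (m l : ℕ) : K := x ^ ((m - l) * (M - l)) * qBinom x m l

lemma prodCoeff_eq_zero_of_lt {m s : ℕ} (h : m < s) : prodCoeff x M m s = 0 := by
  simp [prodCoeff, qBinom_eq_zero_of_lt x h]

@[simp] lemma prodCoeff_self (m : ℕ) : prodCoeff x M m m = 1 := by
  simp [prodCoeff, ← two_mul, pow_mul]

lemma newtonCoeff_eq_zero_of_lt {m l : ℕ} (h : m < l) : newtonCoeff x M m l = 0 := by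
  simp [newtonCoeff, qBinom_eq_zero_of_lt x h]

variable {x}

theorem prod_sub_zpow_eq_sum_prodCoeff (hx : x ≠ 0) (m : ℕ) (z : K) :
    ∏ j ∈ range m, (z - x ^ (M - j)) = ∑ s ∈ range (m + 1), prodCoeff x M m s * z ^ s := by
  have hc₀ : ∀ m, prodCoeff x M (m + 1) 0 = -x ^ (M - m) * prodCoeff x M m 0 := by
    intro m
    have e : M * (m + 1 : ℕ) - ((m + 1).choose 2 : ℕ)
        = (M - m) + (M * m - (m.choose 2 : ℕ)) := by
      push_cast [Nat.choose_succ_succ', Nat.choose_one_right]; ring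
    simp only [prodCoeff, Nat.cast_zero, sub_zero, add_zero, Nat.choose_zero_succ,
      qBinom_zero_right, e, zpow_add₀ hx, pow_succ]
    ring
  have hc : ∀ m s, prodCoeff x M (m + 1) (s + 1)
      = prodCoeff x M m s + -x ^ (M - m) * prodCoeff x M m (s + 1) := by
    intro m s
    have e₁ : x ^ (M * (m + 1 - (s + 1)) + (s + 1).choose 2 - (m + 1).choose 2 : ℤ)
        * x ^ ((m : ℤ) - s) = x ^ (M * (m - s) + s.choose 2 - m.choose 2 : ℤ) := by
      rw [← zpow_add₀ hx]; congr 1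
      push_cast [Nat.choose_succ_succ', Nat.choose_one_right]; ring
    have e₂ : x ^ (M - m) * x ^ (M * (m - (s + 1)) + (s + 1).choose 2 - m.choose 2 : ℤ)
        = x ^ (M * (m + 1 - (s + 1)) + (s + 1).choose 2 - (m + 1).choose 2 : ℤ) := by
      rw [← zpow_add₀ hx]; congr 1
      push_cast [Nat.choose_succ_succ', Nat.choose_one_right]; ring
    simp only [prodCoeff, qBinom_succ_succ, pow_sub_mul_qBinom, mul_add]
    push_cast
    rw [← e₁, ← e₂]
    ring
  rw [sum_mul_eq_prod_of_recurrence (B := fun s => z ^ s) (u := fun j => z - x ^ (M - j))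
    (b := fun m _ => -x ^ (M - m)) (fun _ _ => by ring) hc₀ hc
    (fun m => prodCoeff_eq_zero_of_lt x M m.lt_succ_self) m]
  simp

theorem pow_eq_sum_newtonCoeff (hx : x ≠ 0) (m : ℕ) (z : K) :
    z ^ m
      = ∑ l ∈ range (m + 1), newtonCoeff x M m l * ∏ j ∈ range l, (z - x ^ (M - j)) := by
  have hc₀ : ∀ m, newtonCoeff x M (m + 1) 0 = x ^ (M - (0 : ℕ)) * newtonCoeff x M m 0 := by
    intro m
    simp only [newtonCoeff, Nat.cast_zero, sub_zero, qBinom_zero_right, mul_one]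
    rw [← zpow_add₀ hx]; push_cast; ring_nf
  have hc : ∀ m l, newtonCoeff x M (m + 1) (l + 1)
      = newtonCoeff x M m l + x ^ (M - (l + 1 : ℕ)) * newtonCoeff x M m (l + 1) := by
    intro m l
    have e₁ : x ^ (((m + 1 : ℕ) - (l + 1 : ℕ)) * (M - (l + 1 : ℕ)) : ℤ)
        * x ^ ((m : ℤ) - l) = x ^ ((m - l) * (M - l) : ℤ) := by
      rw [← zpow_add₀ hx]; congr 1; push_cast; ring
    have e₂ : x ^ (M - (l + 1 : ℕ)) * x ^ ((m - (l + 1 : ℕ)) * (M - (l + 1 : ℕ)) : ℤ)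
        = x ^ (((m + 1 : ℕ) - (l + 1 : ℕ)) * (M - (l + 1 : ℕ)) : ℤ) := by
      rw [← zpow_add₀ hx]; congr 1; push_cast; ring
    simp only [newtonCoeff, qBinom_succ_succ, pow_sub_mul_qBinom, mul_add]
    rw [← e₁, ← e₂]
    ring
  rw [sum_mul_eq_prod_of_recurrence (B := fun l => ∏ j ∈ range l, (z - x ^ (M - j)))
    (u := fun _ => z) (b := fun _ l => x ^ (M - l))
    (fun _ l => by simp only [prod_range_succ]; ring) hc₀ hc
    (fun m => newtonCoeff_eq_zero_of_lt x M m.lt_succ_self) m]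
  simp [newtonCoeff]

end GeometricNodes

section Vandermonde

variable {K : Type*} [Field K]

theorem eq_of_vandermonde_mulVec_eq_single_last {l : ℕ} {a : ℕ → K}
    (ha : Set.InjOn a (Set.Iic l)) {c c' : ℕ → K}
    (hc : vandermonde (fun i : Fin (l + 1) => a i) *ᵥ (fun s => c s) = Pi.single (Fin.last l) 1)
    (hc' : ∀ z, ∑ s ∈ range (l + 1), c' s * z ^ s
      = (∏ j ∈ range l, (z - a j)) / ∏ j ∈ range l, (a l - a j))
    {s : ℕ} (hs : s ≤ l) : c s = c' s := by
  have hinj : Function.Injective fun i : Fin (l + 1) => a i := fun i j h =>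
    Fin.ext <| ha (Set.mem_Iic.2 (Nat.lt_succ_iff.1 i.2)) (Set.mem_Iic.2 (Nat.lt_succ_iff.1 j.2)) h
  have hw : ∏ j ∈ range l, (a l - a j) ≠ 0 := prod_ne_zero_iff.2 fun j hj =>
    sub_ne_zero.2 fun h => (mem_range.1 hj).ne'
      (ha (Set.mem_Iic.2 le_rfl) (Set.mem_Iic.2 (mem_range.1 hj).le) h)
  have hc'' : vandermonde (fun i : Fin (l + 1) => a i) *ᵥ (fun s => c' s)
      = Pi.single (Fin.last l) 1 := by
    funext i
    have hrow : (vandermonde (fun i : Fin (l + 1) => a i) *ᵥ (fun s => c' s)) i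
        = (∏ j ∈ range l, (a i - a j)) / ∏ j ∈ range l, (a l - a j) := by
      rw [← hc', ← Fin.sum_univ_eq_sum_range (fun s => c' s * a i ^ s)]
      simp only [mulVec, dotProduct, vandermonde_apply, mul_comm]
    rw [hrow]
    rcases (Nat.lt_succ_iff.1 i.2).lt_or_eq with hi | hi
    · rw [prod_eq_zero (mem_range.2 hi) (sub_self _), zero_div,
        Pi.single_eq_of_ne (Fin.ne_of_val_ne hi.ne)]
    · obtain rfl : i = Fin.last l := Fin.ext hi
      rw [Pi.single_eq_same, Fin.val_last, div_self hw]
  have hV : Function.Injective (vandermonde fun i : Fin (l + 1) => a i).mulVec :=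
    mulVec_injective_iff_isUnit.2 <|
      (isUnit_iff_isUnit_det _).2 (det_vandermonde_ne_zero_iff.2 hinj).isUnit
  exact congrFun (hV (hc.trans hc''.symm)) ⟨s, Nat.lt_succ_of_le hs⟩

end Vandermonde

section ClosedForm

variable {K : Type*} [Field K]

lemma prod_Icc_zpow_sub_zpow_mul_qFactorial (x : K) {m N : ℕ} (h : m ≤ N) :
    (∏ j ∈ Icc 1 m, (x ^ (N : ℤ) - x ^ ((j : ℤ) - 1))) * qFactorial x (N - m)
      = x ^ m.choose 2 * qFactorial x N := by
  induction m with
  | zero => simp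
  | succ m ih =>
    obtain ⟨r, rfl⟩ : ∃ r, N = m + 1 + r := ⟨N - (m + 1), by omega⟩
    have ih := ih (by omega)
    rw [show m + 1 + r - m = r + 1 by omega, qFactorial_succ] at ih
    rw [prod_Icc_succ_top (by omega), show m + 1 + r - (m + 1) = r by omega,
      Nat.choose_succ_succ', Nat.choose_one_right, Nat.cast_succ, add_sub_cancel_right]
    simp only [zpow_natCast] at ih ⊢
    linear_combination x ^ m * ih

lemma two_mul_choose_two (k : ℕ) : 2 * (k.choose 2 : ℤ) = k * (k - 1) := by
  have h : ((2 * (k.choose 2 : ℤ) : ℤ) : ℚ) = ((k * (k - 1) : ℤ) : ℚ) := by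
    push_cast [Nat.cast_choose_two]; ring
  exact_mod_cast h

lemma two_dvd_three_mul_sub_add_one_mul_sub (a b : ℤ) : 2 ∣ (3 * a - b + 1) * (a - b) := by
  have h : (3 * a - b + 1) * (a - b) = (a - b) * (a - b + 1) + 2 * (a * (a - b)) := by ring
  rw [h]
  exact dvd_add (Int.even_mul_succ_self _).two_dvd (dvd_mul_right 2 _)

lemma closedForm_exponent_eq {n i p : ℕ} (hi : i ≤ n) (hp : p ≤ i) :
    -4 * (n : ℤ) ^ 2 + ((n : ℤ) - i) * (2 * n - i) + (2 * n * (i - p) + p.choose 2 - i.choose 2)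
      = ((n : ℤ) + 1) * ((i : ℤ) - p) + (3 * (n : ℤ) - i + 1) * ((n : ℤ) - i) / 2
        - 4 * (n : ℤ) ^ 2 + (n - p).choose 2 := by
  obtain ⟨c, hc⟩ := two_dvd_three_mul_sub_add_one_mul_sub n i
  rw [hc, Int.mul_ediv_cancel_left c two_ne_zero]
  have h₁ := two_mul_choose_two p
  have h₂ := two_mul_choose_two i
  have h₃ := two_mul_choose_two (n - p)
  rw [Nat.cast_sub (hp.trans hi)] at h₃
  refine mul_left_cancel₀ (two_ne_zero : (2 : ℤ) ≠ 0) ?_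
  linear_combination h₁ - h₂ - h₃ + hc

theorem zpow_mul_newtonCoeff_mul_prodCoeff {x : K} (hx : x ≠ 0)
    (hx₁ : ∀ j : ℕ, j ≠ 0 → x ^ j ≠ 1) {n i p : ℕ} (hi : i ≤ n) (hp : p ≤ i) :
    x ^ (-4 * (n : ℤ) ^ 2) * newtonCoeff x (2 * n) n i * prodCoeff x (2 * n) i p
      = (-1) ^ (i - p) * x ^ (((n : ℤ) + 1) * ((i : ℤ) - p)
          + (3 * (n : ℤ) - i + 1) * ((n : ℤ) - i) / 2 - 4 * (n : ℤ) ^ 2)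
        * ((∏ j ∈ Icc 1 (n - p), (x ^ (n : ℤ) - x ^ ((j : ℤ) - 1)))
          / ((∏ j ∈ Icc 1 (i - p), (x ^ (j : ℤ) - 1))
            * ∏ j ∈ Icc 1 (n - i), (x ^ (j : ℤ) - 1))) := by
  have hF : ∀ m, qFactorial x m ≠ 0 := fun m => prod_ne_zero_iff.2 fun j hj =>
    sub_ne_zero.2 (hx₁ j (by simp at hj; omega))
  have hb := qBinom_mul_qFactorial_mul_qFactorial x hp
  have hn := qBinom_mul_qFactorial_mul_qFactorial x hi
  have hA := prod_Icc_zpow_sub_zpow_mul_qFactorial x (Nat.sub_le n p)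
  rw [Nat.sub_sub_self (hp.trans hi)] at hA
  have hexp : x ^ (-4 * (n : ℤ) ^ 2) * x ^ (((n : ℤ) - i) * (2 * n - i))
      * x ^ (2 * (n : ℤ) * (i - p) + p.choose 2 - i.choose 2)
      = x ^ (((n : ℤ) + 1) * ((i : ℤ) - p) + (3 * (n : ℤ) - i + 1) * ((n : ℤ) - i) / 2
          - 4 * (n : ℤ) ^ 2) * x ^ (n - p).choose 2 := by
    rw [← zpow_natCast, ← zpow_add₀ hx, ← zpow_add₀ hx, ← zpow_add₀ hx,
      closedForm_exponent_eq hi hp]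
  have hsign : (-1 : K) ^ (i + p) = (-1) ^ (i - p) := by
    rw [show i + p = i - p + 2 * p by omega, pow_add, pow_mul]; simp
  have hF' : ∀ m : ℕ, ∏ j ∈ Icc 1 m, (x ^ (j : ℤ) - 1) = qFactorial x m := fun m => by
    simp [qFactorial]
  rw [hF', hF', mul_div_assoc', eq_div_iff (mul_ne_zero (hF _) (hF _))]
  refine mul_right_cancel₀ (hF p) ?_
  simp only [newtonCoeff, prodCoeff, hsign]
  linear_combination (x ^ (-4 * (n : ℤ) ^ 2) * x ^ (((n : ℤ) - i) * (2 * n - i))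
      * x ^ (2 * (n : ℤ) * (i - p) + p.choose 2 - i.choose 2) * (-1) ^ (i - p) * qBinom x n i
      * qFactorial x (n - i)) * hb
    + (x ^ (-4 * (n : ℤ) ^ 2) * x ^ (((n : ℤ) - i) * (2 * n - i))
      * x ^ (2 * (n : ℤ) * (i - p) + p.choose 2 - i.choose 2) * (-1) ^ (i - p)) * hn
    - ((-1) ^ (i - p) * x ^ (((n : ℤ) + 1) * ((i : ℤ) - p)
      + (3 * (n : ℤ) - i + 1) * ((n : ℤ) - i) / 2 - 4 * (n : ℤ) ^ 2)) * hA
    + ((-1) ^ (i - p) * qFactorial x n) * hexp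

end ClosedForm

section Application

variable {q : ℝ}

lemma neg_ne_zero_of_one_lt (hq : 1 < q) : -q ≠ 0 :=
  neg_ne_zero.2 (zero_lt_one.trans hq).ne'

lemma neg_zpow_injective (hq : 1 < q) : Function.Injective fun a : ℤ => (-q) ^ a := by
  intro a b h
  have h' := congrArg abs h
  simp only [abs_zpow, abs_neg, abs_of_pos (zero_lt_one.trans hq)] at h'
  exact zpow_right_injective₀ (zero_lt_one.trans hq) hq.ne' h'

lemma neg_pow_ne_one (hq : 1 < q) {j : ℕ} (hj : j ≠ 0) : (-q) ^ j ≠ 1 := by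
  simpa using (neg_zpow_injective hq).ne (show (j : ℤ) ≠ 0 by omega)

/-- `N_l(x_l)` for the nodes `x_j = (-q)^(2n-j)`. -/
noncomputable def nodeWeight (q : ℝ) (n l : ℕ) : ℝ :=
  ∏ j ∈ range l, ((-q) ^ (2 * (n : ℤ) - l) - (-q) ^ (2 * (n : ℤ) - j))

lemma nodeWeight_ne_zero (hq : 1 < q) (n l : ℕ) : nodeWeight q n l ≠ 0 :=
  prod_ne_zero_iff.2 fun j hj =>
    sub_ne_zero.2 <| (neg_zpow_injective hq).ne (by have := mem_range.1 hj; omega)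

noncomputable def dCoeff (q : ℝ) (n s l : ℕ) : ℝ :=
  prodCoeff (-q) (2 * n) l s / nodeWeight q n l

lemma dCoeff_eq_zero_of_lt {n s l : ℕ} (h : l < s) : dCoeff q n s l = 0 := by
  rw [dCoeff, prodCoeff_eq_zero_of_lt _ _ h, zero_div]

lemma sum_dCoeff_mul_pow (hq : 1 < q) (n l : ℕ) (z : ℝ) :
    ∑ s ∈ range (l + 1), dCoeff q n s l * z ^ s
      = (∏ j ∈ range l, (z - (-q) ^ (2 * (n : ℤ) - j))) / nodeWeight q n l := by
  rw [prod_sub_zpow_eq_sum_prodCoeff _ (neg_ne_zero_of_one_lt hq), sum_div]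
  simp only [dCoeff, div_mul_eq_mul_div]

lemma Mmat_eq_vandermonde (q : ℝ) {n l : ℕ} (hl : l ≤ 2 * n) :
    Mmat q n l = vandermonde fun i : Fin (l + 1) => (-q) ^ (2 * (n : ℤ) - (i : ℕ)) := by
  ext i s
  have : ((2 * n - i : ℕ) : ℤ) = 2 * n - i := by omega
  rw [Mmat, of_apply, vandermonde_apply, ← this, zpow_natCast, ← pow_mul, mul_comm]

lemma eq_dCoeff (hq : 1 < q) {n : ℕ} {d : ℕ → ℕ → ℝ}
    (hd : ∀ l, l ≤ 2 * n →
      (Mmat q n l).mulVec (fun i => d (i : ℕ) l) = Pi.single (Fin.last l) 1)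
    {s l : ℕ} (hl : l ≤ 2 * n) (hs : s ≤ l) : d s l = dCoeff q n s l := by
  refine eq_of_vandermonde_mulVec_eq_single_last (a := fun i => (-q) ^ (2 * (n : ℤ) - i))
    (c := fun s => d s l) (fun i _ j _ h => ?_) ?_ (sum_dCoeff_mul_pow hq n l) hs
  · have := neg_zpow_injective hq h
    omega
  · rw [← Mmat_eq_vandermonde q hl]
    exact hd l hl

noncomputable def dMatrix (q : ℝ) (n : ℕ) : Matrix (Fin (2 * n + 1)) (Fin (2 * n + 1)) ℝ :=
  of fun s l => dCoeff q n s l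

lemma Mmat_mul_dMatrix_apply (hq : 1 < q) (n : ℕ) (i l : Fin (2 * n + 1)) :
    (Mmat q n (2 * n) * dMatrix q n) i l
      = (∏ j ∈ range l, ((-q) ^ (2 * (n : ℤ) - (i : ℕ)) - (-q) ^ (2 * (n : ℤ) - j)))
        / nodeWeight q n l := by
  rw [← sum_dCoeff_mul_pow hq, sum_subset (range_subset_range.2 (Nat.succ_le_of_lt l.2))
      fun s _ hs => by rw [dCoeff_eq_zero_of_lt (by simpa using hs), zero_mul],
    ← Fin.sum_univ_eq_sum_range, Mmat_eq_vandermonde q le_rfl, mul_apply]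
  simp only [dMatrix, of_apply, vandermonde_apply, mul_comm]

lemma det_Mmat_mul_dMatrix_ne_zero (hq : 1 < q) (n : ℕ) :
    (Mmat q n (2 * n) * dMatrix q n).det ≠ 0 := by
  have hupper : (dMatrix q n).IsUpperTriangular := fun s l h => dCoeff_eq_zero_of_lt h
  rw [det_mul, Mmat_eq_vandermonde q le_rfl, det_of_isUpperTriangular hupper]
  refine mul_ne_zero (det_vandermonde_ne_zero_iff.2 fun i j h => ?_)
    (prod_ne_zero_iff.2 fun l _ => ?_)
  · have := neg_zpow_injective hq h
    omega
  · simpa [dMatrix, dCoeff] using nodeWeight_ne_zero hq n l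

noncomputable def kCoeff (q : ℝ) (n l : ℕ) : ℝ :=
  if l = 0 then 0
  else (-q) ^ (-4 * (n : ℤ) ^ 2) * newtonCoeff (-q) (2 * n) n l * nodeWeight q n l

lemma Mmat_mul_dMatrix_mulVec_kCoeff_apply (hq : 1 < q) (n : ℕ) (k : Fin (2 * n + 1)) :
    ((Mmat q n (2 * n) * dMatrix q n) *ᵥ (fun l => kCoeff q n l)) k
      = (-q) ^ (-4 * (n : ℤ) ^ 2)
        * (((-q) ^ (2 * (n : ℤ) - (k : ℕ))) ^ n - (-q) ^ (2 * (n : ℤ) * n)) := by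
  set z := (-q) ^ (2 * (n : ℤ) - (k : ℕ))
  have hnewton := pow_eq_sum_newtonCoeff (2 * (n : ℤ)) (neg_ne_zero_of_one_lt hq) n z
  rw [sum_subset (range_subset_range.2 (by omega : n + 1 ≤ 2 * n + 1))
    fun l _ hl => by rw [newtonCoeff_eq_zero_of_lt _ _ (by simpa using hl), zero_mul],
    sum_range_succ'] at hnewton
  have hterm : ∀ l ∈ range (2 * n),
      (∏ j ∈ range (l + 1), (z - (-q) ^ (2 * (n : ℤ) - j))) / nodeWeight q n (l + 1)
        * kCoeff q n (l + 1) = (-q) ^ (-4 * (n : ℤ) ^ 2) * (newtonCoeff (-q) (2 * n) n (l + 1)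
          * ∏ j ∈ range (l + 1), (z - (-q) ^ (2 * (n : ℤ) - j))) := by
    intro l _
    rw [kCoeff, if_neg l.succ_ne_zero]
    field_simp [nodeWeight_ne_zero hq n (l + 1)]
  rw [mulVec, dotProduct]
  simp only [Mmat_mul_dMatrix_apply hq]
  rw [Fin.sum_univ_eq_sum_range (fun l => (∏ j ∈ range l, (z - (-q) ^ (2 * (n : ℤ) - j)))
    / nodeWeight q n l * kCoeff q n l), sum_range_succ', hnewton, sum_congr rfl hterm,
    ← mul_sum]
  simp only [kCoeff, if_pos, newtonCoeff, prod_range_zero, qBinom_zero_right, Nat.cast_zero,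
    sub_zero, mul_one, mul_zero, add_zero]
  ring_nf

lemma Mmat_mul_dMatrix_mulVec_kCoeff (hq : 1 < q) (n : ℕ) :
    (Mmat q n (2 * n) * dMatrix q n) *ᵥ (fun l => kCoeff q n l) = fun k : Fin (2 * n + 1) =>
      if (k : ℕ) = 0 then 0
      else (-q) ^ ((n : ℤ) * (2 * (n : ℤ) - ((k : ℕ) : ℤ)) - 4 * (n : ℤ) ^ 2)
        - (-q) ^ (-2 * (n : ℤ) ^ 2) := by
  have hx := neg_ne_zero_of_one_lt hq
  funext k
  rw [Mmat_mul_dMatrix_mulVec_kCoeff_apply hq, ← zpow_natCast, ← _root_.zpow_mul]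
  split_ifs with hk
  · simp [hk, mul_comm]
  · rw [mul_sub, ← zpow_add₀ hx, ← zpow_add₀ hx]
    congr 2 <;> ring

end Application

theorem stmt11 (q : ℝ) (hq : 1 < q) (n : ℕ)
    (d : ℕ → ℕ → ℝ)
    (hd : ∀ l, l ≤ 2 * n →
      (Mmat q n l).mulVec (fun i => d (i : ℕ) l) = Pi.single (Fin.last l) 1)
    (Δ : Matrix (Fin (2 * n + 1)) (Fin (2 * n + 1)) ℝ)
    (hΔ : ∀ i l : Fin (2 * n + 1),
      Δ i l = if (i : ℕ) ≤ (l : ℕ) then d (i : ℕ) (l : ℕ) else 0)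
    (v : Fin (2 * n + 1) → ℝ)
    (hv : ∀ k : Fin (2 * n + 1), v k =
      if (k : ℕ) = 0 then 0
      else (-q) ^ ((n : ℤ) * (2 * (n : ℤ) - ((k : ℕ) : ℤ)) - 4 * (n : ℤ) ^ 2)
        - (-q) ^ (-2 * (n : ℤ) ^ 2))
    (K : Fin (2 * n + 1) → ℝ)
    (hK : (Mmat q n (2 * n) * Δ).mulVec K = v) :
    ∀ i p : ℕ, ∀ h1 : 1 ≤ i, ∀ h2 : i ≤ n, ∀ h3 : p ≤ i,
      (2 : ℤ) ∣ (3 * (n : ℤ) - (i : ℤ) + 1) * ((n : ℤ) - (i : ℤ)) ∧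
      K ⟨i, by omega⟩ * d p i =
        (-1 : ℝ) ^ (i - p) *
          (-q) ^ (((n : ℤ) + 1) * ((i : ℤ) - (p : ℤ))
            + (3 * (n : ℤ) - (i : ℤ) + 1) * ((n : ℤ) - (i : ℤ)) / 2
            - 4 * (n : ℤ) ^ 2) *
          ((∏ j ∈ Finset.Icc 1 (n - p), ((-q) ^ (n : ℤ) - (-q) ^ ((j : ℤ) - 1))) /
            ((∏ j ∈ Finset.Icc 1 (i - p), ((-q) ^ (j : ℤ) - 1)) *
              (∏ j ∈ Finset.Icc 1 (n - i), ((-q) ^ (j : ℤ) - 1)))) := by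
  intro i p h1 h2 h3
  have hΔ' : Δ = dMatrix q n := by
    ext s l
    rw [hΔ]
    split_ifs with h
    · exact eq_dCoeff hq hd (by omega) h
    · exact (dCoeff_eq_zero_of_lt (by omega)).symm
  subst hΔ'
  have hK' : K = fun l : Fin (2 * n + 1) => kCoeff q n l :=
    mulVec_injective_iff_isUnit.2 ((isUnit_iff_isUnit_det _).2
      (det_Mmat_mul_dMatrix_ne_zero hq n).isUnit) <| by
      rw [hK, Mmat_mul_dMatrix_mulVec_kCoeff hq n]
      exact funext hv
  refine ⟨two_dvd_three_mul_sub_add_one_mul_sub n i, ?_⟩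
  rw [hK']
  dsimp only
  rw [eq_dCoeff hq hd (by omega) h3, kCoeff, if_neg (by omega), dCoeff,
    ← zpow_mul_newtonCoeff_mul_prodCoeff (neg_ne_zero_of_one_lt hq)
      (fun j hj => neg_pow_ne_one hq hj) h2 h3]
  field_simp [nodeWeight_ne_zero hq n i]
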